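/- Let n ∈ ℤ and Γ_n(s) = ∏_{j=0}^{|n|−1} (−is + 1/2 + j)/(is + 1/2 + j). Then for every integer m ≥ 0 and every real s, the m-th derivative satisfies |d^m/ds^m (1/Γ_n(s))| ≤ C^{m+1}·m!·(1+|n|)^m for some absolute constant C. -/

import Mathlib

noncomputable section

/-- `Γ_n(s) = ∏_{j=0}^{|n|−1} (is + 1/2 + j)⁻¹ · (−is + 1/2 + j)`. -/
def Gam (n : ℤ) (z : ℂ) : ℂ :=
  ∏ j ∈ Finset.range n.natAbs,
    ((Complex.I * z + 1/2 + (j : ℂ))⁻¹ * (-(Complex.I * z) + 1/2 + (j : ℂ)))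

open Complex Metric

lemma cauchy_bound {g : ℂ → ℂ} {c : ℂ} {R M : ℝ} (hR : 0 < R)
    (hg : DifferentiableOn ℂ g (closedBall c R))
    (hM : ∀ z ∈ closedBall c R, ‖g z‖ ≤ M) (m : ℕ) :
    ‖iteratedDeriv m g c‖ ≤ m.factorial * (M * (R⁻¹) ^ m) := by
  lift R to NNReal using hR.le with R'
  have hR0 : 0 < R' := by exact_mod_cast hR
  have h := hg.hasFPowerSeriesOnBall hR0
  have key := h.factorial_smul (1 : ℂ) m
  rw [iteratedDeriv_eq_iteratedFDeriv, ← key]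
  have hMnn : 0 ≤ M := (norm_nonneg _).trans (hM c (mem_closedBall_self hR.le))
  have h1 : ‖(m.factorial : ℕ) • (cauchyPowerSeries g c R' m fun _ => (1:ℂ))‖
      = m.factorial * ‖cauchyPowerSeries g c R' m fun _ => (1:ℂ)‖ := by
    rw [nsmul_eq_mul, norm_mul]; norm_num
  rw [h1]
  have h2 : ‖cauchyPowerSeries g c R' m fun _ => (1:ℂ)‖ ≤ ‖cauchyPowerSeries g c R' m‖ := by
    simpa using (cauchyPowerSeries g c R' m).le_opNorm fun _ => (1:ℂ)
  have h3 := norm_cauchyPowerSeries_le g c R' m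
  have hint : (∫ θ : ℝ in (0)..2 * Real.pi, ‖g (circleMap c R' θ)‖) ≤ 2 * Real.pi * M := by
    have hcont : ContinuousOn (fun θ : ℝ => ‖g (circleMap c R' θ)‖) (Set.uIcc 0 (2*Real.pi)) := by
      apply (hg.continuousOn.comp (continuous_circleMap c R').continuousOn ?_).norm
      intro θ _
      exact circleMap_mem_closedBall c R'.coe_nonneg θ
    calc (∫ θ : ℝ in (0)..2 * Real.pi, ‖g (circleMap c R' θ)‖)
        ≤ ∫ _ : ℝ in (0)..2 * Real.pi, M := by
          apply intervalIntegral.integral_mono_on Real.two_pi_pos.le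
            (hcont.intervalIntegrable) intervalIntegrable_const
          intro θ hθ
          exact hM _ (circleMap_mem_closedBall c R'.coe_nonneg θ)
      _ = 2 * Real.pi * M := by simp [mul_comm]
  have h4 : ‖cauchyPowerSeries g c R' m‖ ≤ M * ((R':ℝ))⁻¹ ^ m := by
    refine h3.trans ?_
    rw [_root_.abs_of_nonneg hR.le]
    gcongr
    rw [inv_mul_le_iff₀ Real.two_pi_pos]
    linarith [hint]
  calc (m.factorial : ℝ) * ‖cauchyPowerSeries g c R' m fun _ => (1:ℂ)‖
      ≤ m.factorial * ‖cauchyPowerSeries g c R' m‖ := by gcongr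
    _ ≤ m.factorial * (M * ((R':ℝ))⁻¹ ^ m) := by gcongr

lemma comp_ofReal_iteratedDeriv {V : Set ℂ} (hV : IsOpen V) (hRe : ∀ x : ℝ, (x : ℂ) ∈ V)
    (m : ℕ) : ∀ {g : ℂ → ℂ}, DifferentiableOn ℂ g V → ∀ x : ℝ,
    iteratedDeriv m (fun x : ℝ => g x) x = iteratedDeriv m g x := by
  induction m with
  | zero => intro g _ x; simp
  | succ m ih =>
    intro g hg x
    rw [iteratedDeriv_succ', iteratedDeriv_succ']
    have hd : (fun x : ℝ => deriv (fun x : ℝ => g x) x) = fun x : ℝ => (deriv g) x := by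
      funext y
      exact (((hg.differentiableAt (hV.mem_nhds (hRe y))).hasDerivAt).comp_ofReal).deriv
    rw [show deriv (fun x : ℝ => g x) = fun x : ℝ => (deriv g) x from hd]
    exact ih ((hg.analyticOnNhd hV).deriv.differentiableOn) x
lemma facA_ne {z : ℂ} (hz : |z.im| < 2⁻¹) (j : ℕ) : Complex.I * z + 1/2 + (j : ℂ) ≠ 0 := by
  intro h
  have hre : (Complex.I * z + 1/2 + (j : ℂ)).re = -z.im + 1/2 + j := by simp
  rw [h] at hre
  simp at hre
  have := abs_lt.mp hz
  nlinarith [Nat.cast_nonneg (α := ℝ) j]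

lemma facB_ne {z : ℂ} (hz : |z.im| < 2⁻¹) (j : ℕ) : -(Complex.I * z) + 1/2 + (j : ℂ) ≠ 0 := by
  intro h
  have hre : (-(Complex.I * z) + 1/2 + (j : ℂ)).re = z.im + 1/2 + j := by simp
  rw [h] at hre
  simp at hre
  have := abs_lt.mp hz
  nlinarith [Nat.cast_nonneg (α := ℝ) j]

lemma gam_ne {n : ℤ} {z : ℂ} (hz : |z.im| < 2⁻¹) : Gam n z ≠ 0 := by
  rw [Gam, Finset.prod_ne_zero_iff]
  intro j _
  exact mul_ne_zero (inv_ne_zero (facA_ne hz j)) (facB_ne hz j)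

lemma gamInv_diffOn (n : ℤ) :
    DifferentiableOn ℂ (fun z => (Gam n z)⁻¹) {z : ℂ | |z.im| < 2⁻¹} := by
  apply DifferentiableOn.inv
  · apply DifferentiableOn.fun_finsetProd
    intro j _
    apply DifferentiableOn.mul
    · apply DifferentiableOn.inv
      · fun_prop
      · exact fun z hz => facA_ne hz j
    · fun_prop
  · exact fun z hz => gam_ne hz

lemma gamInv_bound {n : ℤ} {z : ℂ} (hz : |z.im| ≤ (4*(1+(n.natAbs:ℝ)))⁻¹) :
    ‖(Gam n z)⁻¹‖ ≤ Real.exp 4 := by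
  set N := n.natAbs
  set t : ℝ := (1+(N:ℝ))⁻¹ with ht
  have htpos : 0 < t := by positivity
  have ht1 : t ≤ 1 := by
    rw [ht]; rw [inv_le_one_iff₀]; right; linarith [Nat.cast_nonneg (α := ℝ) N]
  have hz' : |z.im| ≤ t/4 := by
    refine hz.trans (le_of_eq ?_); rw [ht]; field_simp
  have step : ∀ j ∈ Finset.range N,
      ‖((Complex.I * z + 1/2 + (j : ℂ))⁻¹ * (-(Complex.I * z) + 1/2 + (j : ℂ)))⁻¹‖ ≤ 1 + 4*t := by
    intro j _
    set c : ℂ := Complex.I * z + 1/2 + (j : ℂ)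
    set d : ℂ := -(Complex.I * z) + 1/2 + (j : ℂ)
    have hz2 : |z.im| < 2⁻¹ := lt_of_le_of_lt hz' (by linarith)
    have hd : d ≠ 0 := facB_ne hz2 j
    have hcre : c.re = 1/2 + j - z.im := by simp [c]; ring
    have hcim : c.im = z.re := by simp [c]
    have hdre : d.re = 1/2 + j + z.im := by simp [d]; ring
    have hdim : d.im = -z.re := by simp [d]
    have hsq : ‖c‖^2 ≤ ((1+4*t) * ‖d‖)^2 := by
      rw [mul_pow, ← Complex.normSq_eq_norm_sq,
        ← Complex.normSq_eq_norm_sq, Complex.normSq_apply, Complex.normSq_apply,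
        hcre, hcim, hdre, hdim]
      set A : ℝ := 1/2 + (j:ℝ) with hAdef
      have hA : (1:ℝ)/2 ≤ A := by
        rw [hAdef]; linarith [Nat.cast_nonneg (α := ℝ) j]
      clear_value A
      have h1 := abs_le.mp hz'
      have h5 : A/2 ≤ A + z.im := by linarith
      have h6 : (A/2)^2 ≤ (A + z.im)^2 := by
        apply pow_le_pow_left₀ (by linarith) h5
      have h7 : A*t ≤ 8*t*(A+z.im)^2 := by
        have s1 : A*t ≤ 8*t*(A/2)^2 := by
          nlinarith [mul_nonneg (mul_nonneg htpos.le (by linarith : (0:ℝ) ≤ A))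
            (by linarith : (0:ℝ) ≤ 2*A - 1)]
        have s2 : 8*t*(A/2)^2 ≤ 8*t*(A+z.im)^2 := by
          apply mul_le_mul_of_nonneg_left h6 (by positivity)
        linarith
      have h8 : -(4*A*z.im) ≤ A*t := by
        nlinarith [mul_nonneg (by linarith : (0:ℝ) ≤ 4*A) (by linarith : (0:ℝ) ≤ t/4 + z.im)]
      nlinarith [h7, h8, mul_nonneg htpos.le (sq_nonneg z.re),
        sq_nonneg (t*(A+z.im)), sq_nonneg (t*z.re)]
    have hc_le : ‖c‖ ≤ (1+4*t) * ‖d‖ := by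
      have hnc : (0:ℝ) ≤ ‖c‖ := norm_nonneg c
      have hnd : (0:ℝ) ≤ (1+4*t) * ‖d‖ := by positivity
      generalize hu : ‖c‖ = u at *
      generalize hv : (1+4*t) * ‖d‖ = v at *
      nlinarith [hsq, hnc, hnd]
    have hdpos : (0:ℝ) < ‖d‖ := norm_pos_iff.mpr hd
    rw [norm_inv, norm_mul, norm_inv, mul_inv, inv_inv, mul_inv_le_iff₀ hdpos]
    exact hc_le
  have : ‖(Gam n z)⁻¹‖ ≤ (1+4*t)^N := by
    rw [Gam, ← Finset.prod_inv_distrib, norm_prod]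
    calc ∏ j ∈ Finset.range N, ‖((Complex.I * z + 1/2 + (j:ℂ))⁻¹ * (-(Complex.I * z) + 1/2 + (j:ℂ)))⁻¹‖
        ≤ ∏ _j ∈ Finset.range N, (1 + 4*t) := Finset.prod_le_prod (fun j _ => norm_nonneg _) step
      _ = (1+4*t)^N := by rw [Finset.prod_const, Finset.card_range]
  refine this.trans ?_
  calc (1+4*t)^N ≤ (Real.exp (4*t))^N :=
        pow_le_pow_left₀ (by positivity) (by linarith [Real.add_one_le_exp (4*t)]) N
    _ = Real.exp (4*t*N) := by rw [← Real.exp_nat_mul]; ring_nf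
    _ ≤ Real.exp 4 := by
        apply Real.exp_le_exp.mpr
        have : t * N ≤ 1 := by
          rw [ht, inv_mul_le_iff₀ (by positivity)]
          linarith
        nlinarith


/-- For every `m ≥ 0` and real `s`, `|d^m/ds^m (1/Γ_n(s))| ≤ C^{m+1}·m!·(1+|n|)^m` for an
absolute constant `C`. -/
theorem stmt_6 : ∃ C > 0, ∀ n : ℤ, ∀ m : ℕ, ∀ s : ℝ,
    ‖iteratedDeriv m (fun x : ℝ => (Gam n (x : ℂ))⁻¹) s‖ ≤
      C^(m+1) * (Nat.factorial m) * (1 + |(n : ℝ)|)^m := by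
  refine ⟨55, by norm_num, fun n m s => ?_⟩
  set N := n.natAbs with hN
  have habsn : |(n:ℝ)| = (N:ℝ) := by
    rw [hN, Nat.cast_natAbs, Int.cast_abs]
  set R : ℝ := (4*(1+(N:ℝ)))⁻¹ with hR
  have hN0 : (0:ℝ) ≤ N := Nat.cast_nonneg N
  have hRpos : 0 < R := by positivity
  have hR4 : R ≤ 4⁻¹ := by
    rw [hR]
    apply inv_anti₀ (by norm_num)
    nlinarith
  -- the strip
  have hVopen : IsOpen {z : ℂ | |z.im| < 2⁻¹} :=
    isOpen_lt (_root_.continuous_abs.comp Complex.continuous_im) continuous_const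
  have hRe : ∀ x : ℝ, (x:ℂ) ∈ {z : ℂ | |z.im| < 2⁻¹} := by
    intro x; simp
  -- membership facts on the closed ball
  have him : ∀ z ∈ closedBall (s:ℂ) R, |z.im| ≤ R := by
    intro z hz
    have h1 : |(z - (s:ℂ)).im| ≤ ‖z - (s:ℂ)‖ := Complex.abs_im_le_norm _
    rw [mem_closedBall, Complex.dist_eq] at hz
    simpa using h1.trans hz
  have hsub : closedBall (s:ℂ) R ⊆ {z : ℂ | |z.im| < 2⁻¹} := by
    intro z hz
    have := him z hz
    simp only [Set.mem_setOf_eq]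
    linarith [hR4]
  -- rewrite the real iterated derivative as complex one
  rw [comp_ofReal_iteratedDeriv hVopen hRe m (gamInv_diffOn n) s]
  -- Cauchy estimate
  have hbd : ∀ z ∈ closedBall (s:ℂ) R, ‖(Gam n z)⁻¹‖ ≤ Real.exp 4 := by
    intro z hz
    exact gamInv_bound ((him z hz).trans (le_of_eq hR))
  have hcb := cauchy_bound hRpos ((gamInv_diffOn n).mono hsub) hbd m
  refine hcb.trans ?_
  have hRinv : R⁻¹ = 4*(1+(N:ℝ)) := by rw [hR, inv_inv]
  have hexp : Real.exp 4 ≤ 55 := by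
    have h1 : Real.exp 4 = (Real.exp 1)^4 := by
      rw [← Real.exp_nat_mul]; norm_num
    rw [h1]
    have h2 : Real.exp 1 ≤ 2.7182818286 := Real.exp_one_lt_d9.le
    calc (Real.exp 1)^4 ≤ (2.7182818286:ℝ)^4 :=
          pow_le_pow_left₀ (Real.exp_pos 1).le h2 4
      _ ≤ 55 := by norm_num
  have h4m : (4:ℝ)^m ≤ 55^m := pow_le_pow_left₀ (by norm_num) (by norm_num) m
  rw [hRinv, habsn]
  calc (m.factorial : ℝ) * (Real.exp 4 * (4*(1+(N:ℝ)))^m)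
      = (Real.exp 4 * 4^m) * ((m.factorial : ℝ) * (1+(N:ℝ))^m) := by
        rw [mul_pow]; ring
    _ ≤ (55 * 55^m) * ((m.factorial : ℝ) * (1+(N:ℝ))^m) := by
        apply mul_le_mul_of_nonneg_right _ (by positivity)
        exact mul_le_mul hexp h4m (by positivity) (by norm_num)
    _ = 55^(m+1) * (m.factorial : ℝ) * (1+(N:ℝ))^m := by
        rw [pow_succ]; ring
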